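/- Let 𝒲₊ ⊆ ℝ^{Nx×Ny} be the cone of nonnegative linear combinations of finitely many fixed matrices w_1,…,w_R with nonnegative entries, let Û ∈ ℝ^{Nx×N} and V̂ ∈ ℝ^{Ny×M}, let C ∈ ℝ^{Nx×Ny} be a cost matrix, and let α ∈ 𝒜. Assume: (a) for every 1 ≤ k ≤ Kx and 1 ≤ l ≤ Ky there exists Π_{k,l} ∈ 𝒲₊ that is a coupling of (μ_k, ν_l); and (b) the all-ones vector 𝟙_{Nx} is a column of Û or 𝟙_{Ny} is a column of V̂. Then the infimum of ⟨Π, C⟩ := Σ_{i,j} Π_{ij} C_{ij} over the feasible set F := {Π ∈ 𝒲₊ : Ûᵀ(Π·𝟙_{Ny}) = Ûᵀμ(α) and V̂ᵀ(Πᵀ·𝟙_{Nx}) = V̂ᵀν(α)} is attained by some Π* ∈ F. -/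

import Mathlib

open scoped BigOperators

def IsCoupling {Nx Ny : ℕ} (P : Matrix (Fin Nx) (Fin Ny) ℝ)
    (μ : Fin Nx → ℝ) (ν : Fin Ny → ℝ) : Prop :=
  (∀ i j, 0 ≤ P i j) ∧ (∀ i, ∑ j, P i j = μ i) ∧ (∀ j, ∑ i, P i j = ν j)

theorem stmt10 {Nx Ny N M R Kx Ky : ℕ} (hNx : 0 < Nx) (hNy : 0 < Ny)
    (hN : 0 < N) (hM : 0 < M) (hR : 0 < R) (hKx : 0 < Kx) (hKy : 0 < Ky)
    (w : Fin R → Matrix (Fin Nx) (Fin Ny) ℝ)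
    (hw : ∀ r i j, 0 ≤ w r i j)
    (U : Matrix (Fin Nx) (Fin N) ℝ) (V : Matrix (Fin Ny) (Fin M) ℝ)
    (C : Matrix (Fin Nx) (Fin Ny) ℝ)
    (μbase : Fin Kx → Fin Nx → ℝ) (νbase : Fin Ky → Fin Ny → ℝ)
    (hμbase : ∀ k, (∀ i, 0 ≤ μbase k i) ∧ ∑ i, μbase k i = 1)
    (hνbase : ∀ l, (∀ j, 0 ≤ νbase l j) ∧ ∑ j, νbase l j = 1)
    (αx : Fin Kx → ℝ) (αy : Fin Ky → ℝ)
    (hαx : (∀ k, 0 ≤ αx k) ∧ ∑ k, αx k = 1)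
    (hαy : (∀ l, 0 ≤ αy l) ∧ ∑ l, αy l = 1)
    (hfeas : ∀ k : Fin Kx, ∀ l : Fin Ky, ∃ P, (∃ c : Fin R → ℝ,
      (∀ r, 0 ≤ c r) ∧ P = ∑ r, c r • w r) ∧ IsCoupling P (μbase k) (νbase l))
    (hones : (∃ n : Fin N, ∀ i, U i n = 1) ∨ (∃ m : Fin M, ∀ j, V j m = 1)) :
    letI F : Set (Matrix (Fin Nx) (Fin Ny) ℝ) :=
      {P | (∃ c : Fin R → ℝ, (∀ r, 0 ≤ c r) ∧ P = ∑ r, c r • w r)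
        ∧ (∀ n : Fin N, ∑ i, U i n * (∑ j, P i j)
            = ∑ i, U i n * (∑ k, αx k * μbase k i))
        ∧ (∀ m : Fin M, ∑ j, V j m * (∑ i, P i j)
            = ∑ j, V j m * (∑ l, αy l * νbase l j))}
    ∃ Pstar ∈ F, ∀ P ∈ F, (∑ i, ∑ j, Pstar i j * C i j) ≤ (∑ i, ∑ j, P i j * C i j) := by
  classical

  -- total mass of each generator
  set s : Fin R → ℝ := fun r => ∑ i, ∑ j, w r i j with hs_def
  have hs0 : ∀ r, 0 ≤ s r := fun r =>
    Finset.sum_nonneg fun i _ => Finset.sum_nonneg fun j _ => hw r i j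
  have hwzero : ∀ r, s r = 0 → w r = 0 := by
    intro r hr
    funext i j
    have h1 := (Finset.sum_eq_zero_iff_of_nonneg
      (fun i _ => Finset.sum_nonneg fun j _ => hw r i j)).1 hr i (Finset.mem_univ i)
    have h2 := (Finset.sum_eq_zero_iff_of_nonneg (fun j _ => hw r i j)).1 h1 j (Finset.mem_univ j)
    simpa using h2
  set Φ : (Fin R → ℝ) → Matrix (Fin Nx) (Fin Ny) ℝ := fun c => ∑ r, c r • w r with hΦ_def
  have hΦe : ∀ c i j, Φ c i j = ∑ r, c r * w r i j := by
    intro c i j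
    rw [hΦ_def]
    simp [Matrix.sum_apply]
  have contΦ : ∀ i j, Continuous fun c : Fin R → ℝ => Φ c i j := by
    intro i j
    have : (fun c : Fin R → ℝ => Φ c i j) = fun c => ∑ r, c r * w r i j := by
      funext c; exact hΦe c i j
    rw [this]
    exact continuous_finset_sum _ fun r _ => (continuous_apply r).mul continuous_const
  -- zeroing useless coefficients doesn't change Φ
  have hΦzero : ∀ c : Fin R → ℝ, Φ (fun r => if s r = 0 then 0 else c r) = Φ c := by
    intro c
    rw [hΦ_def]
    refine Finset.sum_congr rfl fun r _ => ?_
    by_cases hr : s r = 0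
    · simp [hr, hwzero r hr]
    · simp [hr]
  -- total mass of Φ c
  have hΦmass : ∀ c : Fin R → ℝ, ∑ i, ∑ j, Φ c i j = ∑ r, c r * s r := by
    intro c
    calc ∑ i, ∑ j, Φ c i j = ∑ i, ∑ j, ∑ r, c r * w r i j := by
          exact Finset.sum_congr rfl fun i _ => Finset.sum_congr rfl fun j _ => hΦe c i j
      _ = ∑ i, ∑ r, ∑ j, c r * w r i j := Finset.sum_congr rfl fun i _ => Finset.sum_comm
      _ = ∑ r, ∑ i, ∑ j, c r * w r i j := Finset.sum_comm
      _ = ∑ r, c r * s r := by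
          refine Finset.sum_congr rfl fun r _ => ?_
          rw [hs_def]
          simp [Finset.mul_sum]
  -- any matrix satisfying the constraints has total mass 1
  have hmassP : ∀ P : Matrix (Fin Nx) (Fin Ny) ℝ,
      (∀ n, ∑ i, U i n * (∑ j, P i j) = ∑ i, U i n * (∑ k, αx k * μbase k i)) →
      (∀ m, ∑ j, V j m * (∑ i, P i j) = ∑ j, V j m * (∑ l, αy l * νbase l j)) →
      ∑ i, ∑ j, P i j = 1 := by
    intro P h1 h2
    rcases hones with ⟨n, hn⟩ | ⟨m, hm⟩
    · have h := h1 n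
      simp only [hn, one_mul] at h
      rw [h, Finset.sum_comm]
      calc ∑ k, ∑ i, αx k * μbase k i = ∑ k, αx k * ∑ i, μbase k i := by
            exact Finset.sum_congr rfl fun k _ => (Finset.mul_sum _ _ _).symm
        _ = ∑ k, αx k * 1 := Finset.sum_congr rfl fun k _ => by rw [(hμbase k).2]
        _ = 1 := by simpa using hαx.2
    · have h := h2 m
      simp only [hm, one_mul] at h
      rw [show ∑ i, ∑ j, P i j = ∑ j, ∑ i, P i j from Finset.sum_comm, h, Finset.sum_comm]
      calc ∑ l, ∑ j, αy l * νbase l j = ∑ l, αy l * ∑ j, νbase l j := by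
            exact Finset.sum_congr rfl fun l _ => (Finset.mul_sum _ _ _).symm
        _ = ∑ l, αy l * 1 := Finset.sum_congr rfl fun l _ => by rw [(hνbase l).2]
        _ = 1 := by simpa using hαy.2
  -- the feasible coefficient set
  set T : Set (Fin R → ℝ) := {c | (∀ r, 0 ≤ c r) ∧ (∀ r, s r = 0 → c r = 0) ∧
      (∀ n, ∑ i, U i n * (∑ j, Φ c i j) = ∑ i, U i n * (∑ k, αx k * μbase k i)) ∧
      (∀ m, ∑ j, V j m * (∑ i, Φ c i j) = ∑ j, V j m * (∑ l, αy l * νbase l j))} with hT_def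
  -- T is bounded
  have hTsub : T ⊆ Set.pi Set.univ fun r => Set.Icc (0:ℝ) (s r)⁻¹ := by
    rintro c ⟨hc0, hcz, h1, h2⟩ r _
    refine ⟨hc0 r, ?_⟩
    by_cases hr : s r = 0
    · simp [hcz r hr, hr]
    · have hmass1 : ∑ r', c r' * s r' = 1 := by
        rw [← hΦmass c]; exact hmassP _ h1 h2
      have hle : c r * s r ≤ 1 := by
        rw [← hmass1]
        exact Finset.single_le_sum (fun r' _ => mul_nonneg (hc0 r') (hs0 r')) (Finset.mem_univ r)
      have hsr : 0 < s r := lt_of_le_of_ne (hs0 r) (Ne.symm hr)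
      have := (le_div_iff₀ hsr).2 hle
      simpa [one_div] using this
  -- T is closed
  have hTclosed : IsClosed T := by
    rw [hT_def]
    simp only [Set.setOf_and, Set.setOf_forall]
    refine IsClosed.inter ?_ (IsClosed.inter ?_ (IsClosed.inter ?_ ?_))
    · exact isClosed_iInter fun r => isClosed_le continuous_const (continuous_apply r)
    · exact isClosed_iInter fun r => isClosed_iInter fun _ =>
        isClosed_eq (continuous_apply r) continuous_const
    · refine isClosed_iInter fun n => isClosed_eq ?_ continuous_const
      exact continuous_finset_sum _ fun i _ =>
        continuous_const.mul (continuous_finset_sum _ fun j _ => contΦ i j)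
    · refine isClosed_iInter fun m => isClosed_eq ?_ continuous_const
      exact continuous_finset_sum _ fun j _ =>
        continuous_const.mul (continuous_finset_sum _ fun i _ => contΦ i j)
  have hTcompact : IsCompact T :=
    IsCompact.of_isClosed_subset (isCompact_univ_pi fun r => isCompact_Icc) hTclosed hTsub
  -- T is nonempty
  choose Pkl hPkl using hfeas
  choose ckl hckl0 hcklP using fun k l => (hPkl k l).1
  have hcoup := fun k l => (hPkl k l).2
  have hPkle : ∀ k l i j, Pkl k l i j = ∑ r, ckl k l r * w r i j := by
    intro k l i j
    rw [hcklP k l]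
    simp [Matrix.sum_apply]
  set c0 : Fin R → ℝ := fun r => ∑ k, ∑ l, αx k * αy l * ckl k l r with hc0_def
  have hΦc0e : ∀ i j, Φ c0 i j = ∑ k, ∑ l, αx k * αy l * Pkl k l i j := by
    intro i j
    rw [hΦe]
    calc ∑ r, c0 r * w r i j = ∑ r, ∑ k, ∑ l, αx k * αy l * ckl k l r * w r i j := by
          refine Finset.sum_congr rfl fun r _ => ?_
          rw [hc0_def]
          simp [Finset.sum_mul]
      _ = ∑ k, ∑ r, ∑ l, αx k * αy l * ckl k l r * w r i j := Finset.sum_comm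
      _ = ∑ k, ∑ l, ∑ r, αx k * αy l * ckl k l r * w r i j :=
          Finset.sum_congr rfl fun k _ => Finset.sum_comm
      _ = ∑ k, ∑ l, αx k * αy l * Pkl k l i j := by
          refine Finset.sum_congr rfl fun k _ => Finset.sum_congr rfl fun l _ => ?_
          rw [hPkle k l i j, Finset.mul_sum]
          exact Finset.sum_congr rfl fun r _ => by ring
  have hrow0 : ∀ i, ∑ j, Φ c0 i j = ∑ k, αx k * μbase k i := by
    intro i
    calc ∑ j, Φ c0 i j = ∑ j, ∑ k, ∑ l, αx k * αy l * Pkl k l i j :=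
          Finset.sum_congr rfl fun j _ => hΦc0e i j
      _ = ∑ k, ∑ j, ∑ l, αx k * αy l * Pkl k l i j := Finset.sum_comm
      _ = ∑ k, ∑ l, ∑ j, αx k * αy l * Pkl k l i j :=
          Finset.sum_congr rfl fun k _ => Finset.sum_comm
      _ = ∑ k, ∑ l, αx k * αy l * μbase k i := by
          refine Finset.sum_congr rfl fun k _ => Finset.sum_congr rfl fun l _ => ?_
          rw [← Finset.mul_sum, (hcoup k l).2.1 i]
      _ = ∑ k, αx k * μbase k i := by
          refine Finset.sum_congr rfl fun k _ => ?_
          rw [← Finset.sum_mul, ← Finset.mul_sum]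
          rw [hαy.2]
          ring
  have hcol0 : ∀ j, ∑ i, Φ c0 i j = ∑ l, αy l * νbase l j := by
    intro j
    calc ∑ i, Φ c0 i j = ∑ i, ∑ k, ∑ l, αx k * αy l * Pkl k l i j :=
          Finset.sum_congr rfl fun i _ => hΦc0e i j
      _ = ∑ k, ∑ i, ∑ l, αx k * αy l * Pkl k l i j := Finset.sum_comm
      _ = ∑ k, ∑ l, ∑ i, αx k * αy l * Pkl k l i j :=
          Finset.sum_congr rfl fun k _ => Finset.sum_comm
      _ = ∑ k, ∑ l, αx k * αy l * νbase l j := by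
          refine Finset.sum_congr rfl fun k _ => Finset.sum_congr rfl fun l _ => ?_
          rw [← Finset.mul_sum, (hcoup k l).2.2 j]
      _ = ∑ l, αy l * νbase l j := by
          rw [Finset.sum_comm]
          refine Finset.sum_congr rfl fun l _ => ?_
          calc ∑ k, αx k * αy l * νbase l j = (∑ k, αx k) * (αy l * νbase l j) := by
                rw [Finset.sum_mul]
                exact Finset.sum_congr rfl fun k _ => by ring
            _ = αy l * νbase l j := by rw [hαx.2, one_mul]
  -- nonemptiness of T
  have hc0'T : (fun r => if s r = 0 then 0 else c0 r) ∈ T := by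
    rw [hT_def]
    refine ⟨?_, ?_, ?_, ?_⟩
    · intro r
      by_cases hr : s r = 0
      · simp [hr]
      · simp only [hr, if_false]
        rw [hc0_def]
        exact Finset.sum_nonneg fun k _ => Finset.sum_nonneg fun l _ =>
          mul_nonneg (mul_nonneg (hαx.1 k) (hαy.1 l)) (hckl0 k l r)
    · intro r hr; simp [hr]
    · intro n
      rw [hΦzero c0]
      exact Finset.sum_congr rfl fun i _ => by rw [hrow0 i]
    · intro m
      rw [hΦzero c0]
      exact Finset.sum_congr rfl fun j _ => by rw [hcol0 j]
  have hTne : T.Nonempty := ⟨_, hc0'T⟩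
  -- minimize the continuous objective on the compact set T
  have hgcont : Continuous fun c : Fin R → ℝ => ∑ i, ∑ j, Φ c i j * C i j :=
    continuous_finset_sum _ fun i _ =>
      continuous_finset_sum _ fun j _ => (contΦ i j).mul continuous_const
  obtain ⟨cstar, hcstarT, hmin⟩ := hTcompact.exists_isMinOn hTne hgcont.continuousOn
  have hcstarT' := hcstarT
  rw [hT_def] at hcstarT'
  obtain ⟨hst0, hstz, hst1, hst2⟩ := hcstarT'
  refine ⟨Φ cstar, ⟨⟨cstar, hst0, by rw [hΦ_def]⟩, hst1, hst2⟩, ?_⟩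
  rintro P ⟨⟨c, hc0s, hPc⟩, h1, h2⟩
  have hΦcP : Φ c = P := by rw [hPc, hΦ_def]
  have hΦc'P : Φ (fun r => if s r = 0 then 0 else c r) = P := by rw [hΦzero c, hΦcP]
  have hc'T : (fun r => if s r = 0 then 0 else c r) ∈ T := by
    rw [hT_def]
    refine ⟨?_, ?_, ?_, ?_⟩
    · intro r
      by_cases hr : s r = 0
      · simp [hr]
      · simp only [hr, if_false]; exact hc0s r
    · intro r hr; simp [hr]
    · intro n; rw [hΦc'P]; exact h1 n
    · intro m; rw [hΦc'P]; exact h2 m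
  have hle : (∑ i, ∑ j, Φ cstar i j * C i j) ≤ ∑ i, ∑ j, Φ (fun r => if s r = 0 then 0 else c r) i j * C i j := hmin hc'T
  calc ∑ i, ∑ j, Φ cstar i j * C i j
      ≤ ∑ i, ∑ j, Φ (fun r => if s r = 0 then 0 else c r) i j * C i j := hle
    _ = ∑ i, ∑ j, P i j * C i j := by rw [hΦc'P]
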